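/- For each integer k ≥ 2, let G_k be the graph obtained from k disjoint paths a_j b_j c_j d_j e_j f_j (j = 1,...,k) of order 6 together with two new vertices x and y, by adding the edges x a_j and y f_j for all j. Then G_k has girth 14 (for k ≥ 2), minimum degree 2, and all maximal open packings of G_k have the same cardinality, namely 2(k+1). -/

import Mathlib

open SimpleGraph

/-- The open neighborhood graph of `G`: distinct vertices are adjacent iff they have a
common neighbor in `G`. -/
def ong {V : Type*} (G : SimpleGraph V) : SimpleGraph V where
  Adj u v := u ≠ v ∧ ∃ w, G.Adj u w ∧ G.Adj v w
  symm := ⟨by rintro u v ⟨h, w, h1, h2⟩; exact ⟨h.symm, w, h2, h1⟩⟩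
  loopless := ⟨by rintro u ⟨h, -⟩; exact h rfl⟩

/-- A set of vertices is an open packing if no two distinct members have a common neighbor. -/
def IsOpenPacking {V : Type*} (G : SimpleGraph V) (P : Set V) : Prop :=
  ∀ ⦃u⦄, u ∈ P → ∀ ⦃v⦄, v ∈ P → u ≠ v → ∀ w, ¬(G.Adj u w ∧ G.Adj v w)

/-- An independent set of vertices. -/
def IsIndep {V : Type*} (G : SimpleGraph V) (s : Set V) : Prop :=
  s.Pairwise fun u v => ¬ G.Adj u v

/-- All maximal open packings of `G` have the same cardinality. -/
def InU {V : Type*} (G : SimpleGraph V) : Prop :=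
  ∀ P Q : Set V, Maximal (IsOpenPacking G) P → Maximal (IsOpenPacking G) Q →
    P.ncard = Q.ncard

/-- All maximal independent sets of `G` have the same cardinality. -/
def WellCovered {V : Type*} (G : SimpleGraph V) : Prop :=
  ∀ P Q : Set V, Maximal (IsIndep G) P → Maximal (IsIndep G) Q → P.ncard = Q.ncard

/-- A leaf is a vertex with exactly one neighbor. -/
def IsLeaf {V : Type*} (G : SimpleGraph V) (v : V) : Prop :=
  ∃ u, G.neighborSet v = {u}

/-- A support vertex is one adjacent to a leaf. -/
def IsSupport {V : Type*} (G : SimpleGraph V) (s : V) : Prop :=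
  ∃ l, G.neighborSet l = {s}

/-- The graph `G_k`: `k` disjoint paths `a_j b_j c_j d_j e_j f_j` of order 6 (the vertex
`Sum.inl (j, i)` is the `i`-th vertex of the `j`-th path), together with a vertex
`x = Sum.inr 0` adjacent to every `a_j` and a vertex `y = Sum.inr 1` adjacent to every
`f_j`. -/
def Gk (k : ℕ) : SimpleGraph (Fin k × Fin 6 ⊕ Fin 2) :=
  SimpleGraph.fromRel (fun a b =>
    (∃ (j : Fin k) (i : Fin 5), a = Sum.inl (j, i.castSucc) ∧ b = Sum.inl (j, i.succ)) ∨
    (∃ j : Fin k, a = Sum.inr 0 ∧ b = Sum.inl (j, 0)) ∨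
    (∃ j : Fin k, a = Sum.inr 1 ∧ b = Sum.inl (j, 5)))

noncomputable instance (k : ℕ) : DecidableRel (Gk k).Adj := Classical.decRel _

/-!
Every vertex of a cycle has two neighbours on the cycle. In `G_k` a vertex set with this
property that meets a path `a_j … f_j` contains that whole path, hence `x`; then `x` has two
neighbours `a_j`, `a_j'` in it, which drag in both paths and `y`: at least 14 vertices, and
`x a_j … f_j y f_j' … a_j' x` is such a cycle.

Two distinct vertices of `G_k` have a common neighbour exactly when they are adjacent in a graph
with two components, `{x, b_j, d_j, f_j}` and `{y, e_j, c_j, a_j}`, which the reflection of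
`G_k` exchanges. In the first, `x` is joined to every `b_j`, `b_j` to `d_j`, `d_j` to `f_j`,
and the `f_j` form a clique (through `y`). A maximal open packing is a maximal independent set
of this graph, and it meets each component in exactly `k + 1` vertices: either `x` and one of
`d_j, f_j` on each path, or one of `b_j, d_j` on each path together with a single `f_j`.
-/

open Sum

namespace SimpleGraph

variable {V : Type*} {G : SimpleGraph V}

lemma degree_eq_ncard_neighborSet (v : V) [Fintype (G.neighborSet v)] :
    G.degree v = (G.neighborSet v).ncard := by
  rw [← card_neighborFinset_eq_degree, neighborFinset, Set.ncard_eq_toFinset_card']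

def InducedMinDegTwo (G : SimpleGraph V) (S : Set V) : Prop :=
  ∀ v ∈ S, ∃ u₁ u₂, u₁ ≠ u₂ ∧ G.Adj v u₁ ∧ G.Adj v u₂ ∧ u₁ ∈ S ∧ u₂ ∈ S

lemma InducedMinDegTwo.mem_of_neighborSet_subset {S : Set V} (hS : InducedMinDegTwo G S)
    {v a b : V} (hv : v ∈ S) (h : G.neighborSet v ⊆ {a, b}) : a ∈ S ∧ b ∈ S := by
  obtain ⟨u₁, u₂, hne, h₁, h₂, hu₁, hu₂⟩ := hS v hv
  rcases h h₁ with rfl | rfl <;> rcases h h₂ with rfl | rfl <;> simp_all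

lemma Walk.IsCycle.inducedMinDegTwo_support {u : V} {c : G.Walk u u} (hc : c.IsCycle) :
    InducedMinDegTwo G {v | v ∈ c.support} := by
  intro v hv
  obtain ⟨u₁, u₂, hne, hpair⟩ := Set.ncard_eq_two.mp (hc.ncard_neighborSet_toSubgraph_eq_two hv)
  have hadj (w : V) (hw : c.toSubgraph.Adj v w) : G.Adj v w ∧ w ∈ c.support :=
    ⟨hw.adj_sub, c.mem_verts_toSubgraph.mp hw.snd_mem⟩
  have h₁ := hadj u₁ (by simp [← Subgraph.mem_neighborSet, hpair])
  have h₂ := hadj u₂ (by simp [← Subgraph.mem_neighborSet, hpair])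
  exact ⟨u₁, u₂, hne, h₁.1, h₂.1, h₁.2, h₂.2⟩

lemma Walk.card_toFinset_support_le_length [DecidableEq V] {u : V} {c : G.Walk u u}
    (hc : ¬c.Nil) : c.support.toFinset.card ≤ c.length := by
  rw [← c.cons_tail_support, List.toFinset_cons,
    Finset.insert_eq_of_mem (List.mem_toFinset.mpr (c.end_mem_tail_support hc))]
  calc c.support.tail.toFinset.card ≤ c.support.tail.length := List.toFinset_card_le _
    _ = c.length := by simp

end SimpleGraph

lemma Fin.eq_univ_of_succ_closed {n : ℕ} {T : Set (Fin (n + 1))}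
    (hup : ∀ i : Fin n, i.castSucc ∈ T → i.succ ∈ T)
    (hdown : ∀ i : Fin n, i.succ ∈ T → i.castSucc ∈ T) (hT : T.Nonempty) : T = Set.univ := by
  obtain ⟨i, hi⟩ := hT
  have h₀ : 0 ∈ T := by
    induction i using Fin.induction with
    | zero => exact hi
    | succ i ih => exact ih (hdown i hi)
  refine Set.eq_univ_of_forall fun i => ?_
  induction i using Fin.induction with
  | zero => exact h₀
  | succ i ih => exact hup i ih

section OpenPacking

variable {V W : Type*} {G : SimpleGraph V} {H : SimpleGraph W}

lemma IsOpenPacking.insert {P : Set V} (hP : IsOpenPacking G P) {v : V}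
    (hv : ∀ u ∈ P, u ≠ v → ∀ w, ¬(G.Adj u w ∧ G.Adj v w)) : IsOpenPacking G (insert v P) := by
  rintro u (rfl | hu) u' (rfl | hu') hne w
  · exact absurd rfl hne
  · exact fun h => hv u' hu' hne.symm w h.symm
  · exact hv u hu hne w
  · exact hP hu hu' hne w

lemma exists_mem_neighborSet_of_maximal_isOpenPacking {P : Set V}
    (hP : Maximal (IsOpenPacking G) P) {v : V} (hv : v ∉ P) :
    ∃ w ∈ G.neighborSet v, ∃ u ∈ G.neighborSet w, u ≠ v ∧ u ∈ P := by
  by_contra! h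
  refine hP.not_prop_of_ssuperset (Set.ssubset_insert hv) (hP.prop.insert ?_)
  rintro u hu hne w ⟨huw, hvw⟩
  exact h w hvw u huw.symm hne hu

lemma isOpenPacking_preimage_iff (φ : G ≃g H) {P : Set W} :
    IsOpenPacking G (φ ⁻¹' P) ↔ IsOpenPacking H P := by
  refine ⟨fun hP u hu v hv hne w hw => ?_, fun hP u hu v hv hne w hw => ?_⟩
  · exact hP (u := φ.symm u) (by simpa using hu) (v := φ.symm v) (by simpa using hv)
      (by simpa using hne) (φ.symm w) (hw.imp φ.symm.map_adj_iff.mpr φ.symm.map_adj_iff.mpr)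
  · exact hP hu hv (φ.injective.ne hne) (φ w) (hw.imp φ.map_adj_iff.mpr φ.map_adj_iff.mpr)

lemma Maximal.isOpenPacking_preimage (φ : G ≃g H) {P : Set W}
    (hP : Maximal (IsOpenPacking H) P) : Maximal (IsOpenPacking G) (φ ⁻¹' P) := by
  refine ⟨(isOpenPacking_preimage_iff φ).2 hP.prop, fun Q hQ hPQ v hv => ?_⟩
  have hQ' : IsOpenPacking H (φ.symm ⁻¹' Q) := by rwa [isOpenPacking_preimage_iff]
  exact hP.2 hQ' (fun w hw => hPQ (by simpa using hw)) (by simpa using hv)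

end OpenPacking

/-- The propositions record which vertices a maximal independent set contains, in the graph
with edges `x b_j`, `b_j d_j`, `d_j f_j` and `f_j f_j'` (`j ≠ j'`). -/
theorem count_maximal_indep_spider {k : ℕ} {x : Prop} {b d f : Fin k → Prop} [Decidable x]
    [DecidablePred b] [DecidablePred d] [DecidablePred f]
    (hxb : ∀ j, ¬(x ∧ b j)) (hbd : ∀ j, ¬(b j ∧ d j)) (hdf : ∀ j, ¬(d j ∧ f j))
    (hff : ∀ j j', j ≠ j' → ¬(f j ∧ f j'))
    (hx : ¬x → ∃ j, b j) (hb : ∀ j, ¬b j → x ∨ d j) (hd : ∀ j, ¬d j → b j ∨ f j)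
    (hf : ∀ j, ¬f j → d j ∨ ∃ j', j' ≠ j ∧ f j') :
    ((if x then 1 else 0) + ∑ j, ((if b j then 1 else 0) + (if d j then 1 else 0) +
      (if f j then 1 else 0)) : ℕ) = k + 1 := by
  by_cases hx' : x
  · have hj (j : Fin k) : ((if b j then 1 else 0) + (if d j then 1 else 0) +
        (if f j then 1 else 0) : ℕ) = 1 := by
      have := hxb j; have := hd j; have := hdf j
      split_ifs <;> tauto
    simp [hx', hj, add_comm]
  · obtain ⟨j₀, hj₀⟩ := hx hx'
    obtain ⟨j₁, hj₁⟩ : ∃ j₁, f j₁ := by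
      by_contra! h
      rcases hf j₀ (h j₀) with h' | ⟨j', -, h'⟩
      · exact hbd j₀ ⟨hj₀, h'⟩
      · exact h j' h'
    have hj (j : Fin k) : ((if b j then 1 else 0) + (if d j then 1 else 0) +
        (if f j then 1 else 0) : ℕ) = 1 + if j = j₁ then 1 else 0 := by
      have hfj : f j ↔ j = j₁ :=
        ⟨fun h => by_contra fun hne => hff j j₁ hne ⟨h, hj₁⟩, fun h => h ▸ hj₁⟩
      have := hb j; have := hbd j; have := hdf j
      simp only [hfj]
      split_ifs <;> tauto
    simp [hx', hj, Finset.sum_add_distrib]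

namespace Gk

variable {k : ℕ}

@[simp] lemma adj_inl_inl {j j' : Fin k} {i i' : Fin 6} :
    (Gk k).Adj (inl (j, i)) (inl (j', i')) ↔
      j = j' ∧ (i.val + 1 = i'.val ∨ i'.val + 1 = i.val) := by
  simp only [Gk, fromRel_adj, ne_eq, inl.injEq, Prod.mk.injEq, reduceCtorEq, false_and,
    exists_false, or_false]
  constructor
  · rintro ⟨-, (⟨j₀, i₀, ⟨rfl, rfl⟩, rfl, rfl⟩ | ⟨j₀, i₀, ⟨rfl, rfl⟩, rfl, rfl⟩)⟩ <;> simp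
  · rintro ⟨rfl, h | h⟩
    · exact ⟨by omega, Or.inl ⟨j, ⟨i, by omega⟩, ⟨rfl, rfl⟩, rfl, Fin.ext (by simp; omega)⟩⟩
    · exact ⟨by omega, Or.inr ⟨j, ⟨i', by omega⟩, ⟨rfl, rfl⟩, rfl, Fin.ext (by simp; omega)⟩⟩

@[simp] lemma adj_inr_inl {t : Fin 2} {j : Fin k} {i : Fin 6} :
    (Gk k).Adj (inr t) (inl (j, i)) ↔ (t = 0 ∧ i = 0) ∨ (t = 1 ∧ i = 5) := by
  simp [Gk, fromRel_adj]

@[simp] lemma adj_inl_inr {t : Fin 2} {j : Fin k} {i : Fin 6} :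
    (Gk k).Adj (inl (j, i)) (inr t) ↔ (t = 0 ∧ i = 0) ∨ (t = 1 ∧ i = 5) := by
  rw [adj_comm, adj_inr_inl]

@[simp] lemma not_adj_inr_inr {t t' : Fin 2} : ¬(Gk k).Adj (inr t) (inr t') := by
  simp [Gk, fromRel_adj]

def prev (j : Fin k) (i : Fin 6) : Fin k × Fin 6 ⊕ Fin 2 :=
  if i = 0 then inr 0 else inl (j, i - 1)

def next (j : Fin k) (i : Fin 6) : Fin k × Fin 6 ⊕ Fin 2 :=
  if i = 5 then inr 1 else inl (j, i + 1)

lemma prev_ne_next (j : Fin k) (i : Fin 6) : prev j i ≠ next j i := by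
  fin_cases i <;> simp [prev, next]

lemma next_castSucc (j : Fin k) (i : Fin 5) : next j i.castSucc = inl (j, i.succ) := by
  fin_cases i <;> rfl

lemma prev_succ (j : Fin k) (i : Fin 5) : prev j i.succ = inl (j, i.castSucc) := by
  fin_cases i <;> rfl

lemma neighborSet_inl (j : Fin k) (i : Fin 6) :
    (Gk k).neighborSet (inl (j, i)) = {prev j i, next j i} := by
  ext (⟨j', i'⟩ | t) <;> fin_cases i <;> simp [prev, next] <;> omega

lemma neighborSet_inr_zero : (Gk k).neighborSet (inr 0) = Set.range fun j => inl (j, 0) := by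
  ext (⟨j, i⟩ | t) <;> simp [eq_comm]

lemma neighborSet_inr_one : (Gk k).neighborSet (inr 1) = Set.range fun j => inl (j, 5) := by
  ext (⟨j, i⟩ | t) <;> simp [eq_comm]

lemma degree_inl (j : Fin k) (i : Fin 6) : (Gk k).degree (inl (j, i)) = 2 := by
  rw [degree_eq_ncard_neighborSet, neighborSet_inl, Set.ncard_pair (prev_ne_next j i)]

lemma degree_inr (t : Fin 2) : (Gk k).degree (inr t) = k := by
  have hinj (i : Fin 6) :
      Function.Injective fun j : Fin k => (inl (j, i) : Fin k × Fin 6 ⊕ Fin 2) :=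
    fun _ _ h => by simpa using h
  rw [degree_eq_ncard_neighborSet]
  match t with
  | 0 => rw [neighborSet_inr_zero, Set.ncard_range_of_injective (hinj 0), Nat.card_fin]
  | 1 => rw [neighborSet_inr_one, Set.ncard_range_of_injective (hinj 5), Nat.card_fin]

lemma minDegree_eq (hk : 2 ≤ k) : (Gk k).minDegree = 2 := by
  let j₀ : Fin k := ⟨0, by omega⟩
  refine le_antisymm ((minDegree_le_degree _ (inl (j₀, 0))).trans (degree_inl j₀ 0).le)
    (le_minDegree_of_forall_le_degree _ _ fun v => ?_)
  rcases v with ⟨j, i⟩ | t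
  · exact (degree_inl j i).ge
  · exact (degree_inr t).ge.trans' hk

def spoke (j : Fin k) : (Gk k).Walk (inr 0) (inr 1) :=
  .cons (by simp : (Gk k).Adj (inr 0) (inl (j, 0))) <|
  .cons (by simp : (Gk k).Adj (inl (j, 0)) (inl (j, 1))) <|
  .cons (by simp : (Gk k).Adj (inl (j, 1)) (inl (j, 2))) <|
  .cons (by simp : (Gk k).Adj (inl (j, 2)) (inl (j, 3))) <|
  .cons (by simp : (Gk k).Adj (inl (j, 3)) (inl (j, 4))) <|
  .cons (by simp : (Gk k).Adj (inl (j, 4)) (inl (j, 5))) <|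
  .cons (by simp : (Gk k).Adj (inl (j, 5)) (inr 1)) .nil

lemma isPath_spoke (j : Fin k) : (spoke j).IsPath := by
  simp [spoke, Walk.isPath_def]

lemma isCycle_spoke_append_reverse {j j' : Fin k} (h : j ≠ j') :
    ((spoke j).append (spoke j').reverse).IsCycle := by
  refine (isPath_spoke j).isCycle_append (isPath_spoke j').reverse ?_ (by simp [spoke])
  simp [spoke, Ne.symm h]

lemma egirth_le (hk : 2 ≤ k) : (Gk k).egirth ≤ 14 := by
  have hc := isCycle_spoke_append_reverse (k := k) (j := ⟨0, by omega⟩) (j' := ⟨1, by omega⟩)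
    (by simp)
  simpa [spoke] using egirth_le_length hc

section InducedMinDegTwo

variable {S : Set (Fin k × Fin 6 ⊕ Fin 2)}

lemma inl_mem_of_inducedMinDegTwo (hS : InducedMinDegTwo (Gk k) S) {j : Fin k} {i : Fin 6}
    (hi : inl (j, i) ∈ S) (i' : Fin 6) : inl (j, i') ∈ S := by
  have hnbrs (i : Fin 6) (hi : inl (j, i) ∈ S) : prev j i ∈ S ∧ next j i ∈ S :=
    hS.mem_of_neighborSet_subset hi (neighborSet_inl j i).subset
  have hT : {i : Fin 6 | inl (j, i) ∈ S} = Set.univ :=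
    Fin.eq_univ_of_succ_closed
      (fun i hi => by simpa [next_castSucc] using (hnbrs _ hi).2)
      (fun i hi => by simpa [prev_succ] using (hnbrs _ hi).1) ⟨i, hi⟩
  simpa using hT.ge (Set.mem_univ i')

lemma inr_zero_mem_of_inducedMinDegTwo (hS : InducedMinDegTwo (Gk k) S) (hne : S.Nonempty) :
    inr 0 ∈ S := by
  have of_inl (j : Fin k) (i : Fin 6) (hi : inl (j, i) ∈ S) : inr 0 ∈ S :=
    (hS.mem_of_neighborSet_subset (inl_mem_of_inducedMinDegTwo hS hi 0)
      (neighborSet_inl j 0).subset).1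
  match hne with
  | ⟨inl (j, i), hv⟩ => exact of_inl j i hv
  | ⟨inr 0, hv⟩ => exact hv
  | ⟨inr 1, hv⟩ =>
    obtain ⟨u, -, -, hu, -, huS, -⟩ := hS _ hv
    rw [← mem_neighborSet, neighborSet_inr_one] at hu
    obtain ⟨j, rfl⟩ := hu
    exact of_inl j 5 huS

lemma fourteen_le_ncard_of_inducedMinDegTwo (hS : InducedMinDegTwo (Gk k) S)
    (hne : S.Nonempty) : 14 ≤ S.ncard := by
  obtain ⟨u₁, u₂, hne, h₁, h₂, hu₁, hu₂⟩ := hS _ (inr_zero_mem_of_inducedMinDegTwo hS hne)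
  rw [← mem_neighborSet, neighborSet_inr_zero] at h₁ h₂
  obtain ⟨j, rfl⟩ := h₁
  obtain ⟨j', rfl⟩ := h₂
  let φ : Fin 2 × Fin 6 ⊕ Fin 2 → Fin k × Fin 6 ⊕ Fin 2 := Sum.map (Prod.map ![j, j'] id) id
  have hφ : Function.Injective φ := by
    refine Sum.map_injective.mpr ⟨Prod.map_injective.mpr ⟨?_, Function.injective_id⟩,
      Function.injective_id⟩
    intro a b hab
    fin_cases a <;> fin_cases b <;> simp_all [eq_comm]
  have hrange : Set.range φ ⊆ S := by
    rintro _ ⟨v, rfl⟩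
    match v with
    | inl (0, i) => exact inl_mem_of_inducedMinDegTwo hS hu₁ i
    | inl (1, i) => exact inl_mem_of_inducedMinDegTwo hS hu₂ i
    | inr 0 => exact inr_zero_mem_of_inducedMinDegTwo hS ⟨_, hu₁⟩
    | inr 1 =>
      exact (hS.mem_of_neighborSet_subset (inl_mem_of_inducedMinDegTwo hS hu₁ 5)
        (neighborSet_inl j 5).subset).2
  calc 14 = (Set.range φ).ncard := by simp [Set.ncard_range_of_injective hφ]
    _ ≤ S.ncard := Set.ncard_le_ncard hrange

end InducedMinDegTwo

lemma egirth_eq (hk : 2 ≤ k) : (Gk k).egirth = 14 := by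
  classical
  refine le_antisymm (egirth_le hk) (le_egirth.mpr fun a c hc => ?_)
  have h14 := fourteen_le_ncard_of_inducedMinDegTwo hc.inducedMinDegTwo_support
    ⟨a, c.start_mem_support⟩
  rw [← List.coe_toFinset, Set.ncard_coe_finset] at h14
  exact_mod_cast h14.trans (c.card_toFinset_support_le_length hc.not_nil)

/-- The symmetry exchanging `x` with `y` and reversing every path. -/
def reflect (k : ℕ) : Gk k ≃g Gk k where
  toFun := Sum.map (Prod.map id Fin.rev) Fin.rev
  invFun := Sum.map (Prod.map id Fin.rev) Fin.rev
  left_inv := by rintro (⟨j, i⟩ | t) <;> simp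
  right_inv := by rintro (⟨j, i⟩ | t) <;> simp
  map_rel_iff' := by
    rintro (⟨j, i⟩ | t) (⟨j', i'⟩ | t')
    all_goals simp only [Equiv.coe_fn_mk, Sum.map_inl, Sum.map_inr, Prod.map]
    · simp only [adj_inl_inl, id, Fin.val_rev]; omega
    · simp only [adj_inl_inr, Fin.ext_iff, Fin.val_rev]; omega
    · simp only [adj_inr_inl, Fin.ext_iff, Fin.val_rev]; omega
    · simp

variable {P : Set (Fin k × Fin 6 ⊕ Fin 2)}

open Classical in
lemma count_component_inr_zero (hP : Maximal (IsOpenPacking (Gk k)) P) :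
    ((if inr 0 ∈ P then 1 else 0) + ∑ j : Fin k, ((if inl (j, 1) ∈ P then 1 else 0) +
      (if inl (j, 3) ∈ P then 1 else 0) + (if inl (j, 5) ∈ P then 1 else 0)) : ℕ) = k + 1 := by
  have hmax {v} (hv : v ∉ P) := exists_mem_neighborSet_of_maximal_isOpenPacking hP hv
  apply count_maximal_indep_spider
  · rintro j ⟨hx, hb⟩; exact hP.1 hx hb (by simp) (inl (j, 0)) (by simp)
  · rintro j ⟨hb, hd⟩; exact hP.1 hb hd (by simp) (inl (j, 2)) (by simp)
  · rintro j ⟨hd, hf⟩; exact hP.1 hd hf (by simp) (inl (j, 4)) (by simp)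
  · rintro j j' hjj' ⟨hf, hf'⟩; exact hP.1 hf hf' (by simpa) (inr 1) (by simp)
  · intro hx
    obtain ⟨w, hw, u, hu, huv, huP⟩ := hmax hx
    rw [neighborSet_inr_zero] at hw
    obtain ⟨j, rfl⟩ := hw
    simp [neighborSet_inl, prev, next] at hu
    rcases hu with rfl | rfl
    exacts [absurd rfl huv, ⟨j, huP⟩]
  · intro j hb
    obtain ⟨w, hw, u, hu, huv, huP⟩ := hmax hb
    simp [neighborSet_inl, prev, next] at hw
    rcases hw with rfl | rfl <;> simp [neighborSet_inl, prev, next] at hu <;>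
      rcases hu with rfl | rfl
    exacts [Or.inl huP, absurd rfl huv, absurd rfl huv, Or.inr huP]
  · intro j hd
    obtain ⟨w, hw, u, hu, huv, huP⟩ := hmax hd
    simp [neighborSet_inl, prev, next] at hw
    rcases hw with rfl | rfl <;> simp [neighborSet_inl, prev, next] at hu <;>
      rcases hu with rfl | rfl
    exacts [Or.inl huP, absurd rfl huv, absurd rfl huv, Or.inr huP]
  · intro j hf
    obtain ⟨w, hw, u, hu, huv, huP⟩ := hmax hf
    simp [neighborSet_inl, prev, next] at hw
    rcases hw with rfl | rfl
    · simp [neighborSet_inl, prev, next] at hu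
      rcases hu with rfl | rfl
      exacts [Or.inl huP, absurd rfl huv]
    · rw [neighborSet_inr_one] at hu
      obtain ⟨j', rfl⟩ := hu
      exact Or.inr ⟨j', by simpa using huv, huP⟩

lemma ncard_of_maximal_isOpenPacking (hP : Maximal (IsOpenPacking (Gk k)) P) :
    P.ncard = 2 * (k + 1) := by
  classical
  have hx := count_component_inr_zero hP
  have hy := count_component_inr_zero (hP.isOpenPacking_preimage (reflect k))
  simp [reflect] at hy
  have hsum : P.ncard = ∑ v, if v ∈ P then 1 else 0 := by
    rw [Set.ncard_eq_toFinset_card', ← Finset.card_filter]; congr; ext; simp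
  simp only [hsum, Fintype.sum_sum_type, Fintype.sum_prod_type, Fin.sum_univ_six,
    Fin.sum_univ_two, Finset.sum_add_distrib] at hx hy ⊢
  omega

end Gk

theorem stmt19 (k : ℕ) (hk : 2 ≤ k) :
    (Gk k).egirth = 14 ∧ (Gk k).minDegree = 2 ∧
    ∀ P, Maximal (IsOpenPacking (Gk k)) P → P.ncard = 2 * (k + 1) :=
  ⟨Gk.egirth_eq hk, Gk.minDegree_eq hk, fun _ => Gk.ncard_of_maximal_isOpenPacking⟩
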